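/- Let λ be a nearest-neighbor path of length m in ℤ^d and let 0 = t₀ < t₁ < ⋯ < t_n = m be cut times of λ (each tᵢ satisfies {λ(0),…,λ(tᵢ)} ∩ {λ(tᵢ+1),…,λ(m)} = ∅ for i < n). Then len(LE(λ)) = Σ_{i=1}^{n} len(LE(λ[t_{i−1}, t_i])). -/

import Mathlib

/-- A nearest-neighbor adjacency on `ℤ^d`. -/
def NNAdj {d : ℕ} (x y : Fin d → ℤ) : Prop := (∑ i, |x i - y i|) = 1

/-- A nearest-neighbor path in `ℤ^d`, represented as its (finite) list of vertices. -/
def IsNNPath {d : ℕ} (lam : List (Fin d → ℤ)) : Prop := lam.Chain' NNAdj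

/-- Chronological loop erasure. -/
def loopErase {α : Type*} [DecidableEq α] : List α → List α
  | [] => []
  | a :: l => a :: loopErase ((l.reverse.takeWhile (· ≠ a)).reverse)
  termination_by l => l.length
  decreasing_by
    simp only [List.length_cons, List.length_reverse]
    exact Nat.lt_succ_of_le (le_trans (List.takeWhile_sublist _).length_le (by simp))

/-!
If `s` is a cut time of `λ`, the vertices visited up to time `s` are never revisited, so no
loop erased from `λ` straddles time `s`: `LE(λ)` is the concatenation of `LE(λ[0,s])` and
`LE(λ[s+1,m])`, and `LE(λ[s,m])` is `LE(λ[s+1,m])` with `λ(s)` put in front. Counting steps,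
`len LE(λ) = len LE(λ[0,s]) + len LE(λ[s,m])`, and the theorem follows by induction on the
number of cut times, peeling off the last piece.
-/

namespace List

variable {α : Type*}

def IsCutTime (l : List α) (s : ℕ) : Prop :=
  (l.take (s + 1)).Disjoint (l.drop (s + 1))

/-- The subpath `λ[a,b]`. -/
def subpath (l : List α) (a b : ℕ) : List α :=
  (l.drop a).take (b - a + 1)

theorem IsCutTime.take {l : List α} {s : ℕ} (h : l.IsCutTime s) (k : ℕ) :
    (l.take k).IsCutTime s := by
  unfold IsCutTime at h ⊢
  rw [take_take, drop_take]
  exact disjoint_of_subset_right (take_subset _ _)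
    (disjoint_of_subset_left (take_subset_take_left _ (Nat.min_le_left _ _)) h)

theorem subpath_take {l : List α} {a b s : ℕ} (hab : a ≤ b) (hbs : b ≤ s) :
    (l.take (s + 1)).subpath a b = l.subpath a b := by
  rw [subpath, subpath, drop_take, take_take, Nat.min_eq_left (by omega)]

theorem subpath_length_sub_one (l : List α) (a : ℕ) :
    l.subpath a (l.length - 1) = l.drop a :=
  take_of_length_le (by rw [length_drop]; omega)

end List

section LoopErase

open List

variable {α : Type*} [DecidableEq α]

theorem loopErase_cons (a : α) (l : List α) :
    loopErase (a :: l) = a :: loopErase (l.reverse.takeWhile (· ≠ a)).reverse := by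
  rw [loopErase]

theorem loopErase_of_length_le_one {l : List α} (h : l.length ≤ 1) : loopErase l = l := by
  match l, h with
  | [], _ => rw [loopErase]
  | [a], _ => rw [loopErase_cons]; simp [loopErase]

theorem loopErase_ne_nil {l : List α} (h : l ≠ []) : loopErase l ≠ [] := by
  obtain ⟨a, l, rfl⟩ := exists_cons_of_ne_nil h
  simp [loopErase_cons]

-- `(l.reverse.takeWhile (· ≠ a)).reverse` is the part of `l` after its last occurrence of `a`.
theorem reverse_takeWhile_reverse_append {a : α} (l₁ : List α) {l₂ : List α} (h : a ∉ l₂) :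
    ((l₁ ++ l₂).reverse.takeWhile (· ≠ a)).reverse =
      (l₁.reverse.takeWhile (· ≠ a)).reverse ++ l₂ := by
  rw [reverse_append, takeWhile_append_of_pos, reverse_append, reverse_reverse]
  intro x hx
  simpa using fun hxa : x = a => h (hxa ▸ mem_reverse.mp hx)

theorem loopErase_append {l₁ l₂ : List α} (h : l₁.Disjoint l₂) :
    loopErase (l₁ ++ l₂) = loopErase l₁ ++ loopErase l₂ := by
  match l₁ with
  | [] => simp [loopErase]
  | a :: l₁ =>
    have ha : a ∉ l₂ := (disjoint_cons_left.mp h).1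
    have hrest : ((l₁.reverse.takeWhile (· ≠ a)).reverse).Disjoint l₂ :=
      disjoint_of_subset_left
        (fun x hx => mem_cons_of_mem a <| mem_reverse.mp <|
          (takeWhile_sublist _).subset (mem_reverse.mp hx)) h
    rw [cons_append, loopErase_cons, loopErase_cons, reverse_takeWhile_reverse_append _ ha,
      loopErase_append hrest, cons_append]
termination_by l₁.length
decreasing_by
  simp only [length_cons, length_reverse]
  exact Nat.lt_succ_of_le ((takeWhile_sublist _).length_le.trans (by simp))

theorem loopErase_cons_of_notMem {a : α} {l : List α} (h : a ∉ l) :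
    loopErase (a :: l) = a :: loopErase l := by
  rw [← singleton_append, loopErase_append (singleton_disjoint.mpr h),
    loopErase_of_length_le_one (by simp), singleton_append]

theorem length_loopErase_sub_one_of_isCutTime {l : List α} {s : ℕ} (hs : s < l.length)
    (h : l.IsCutTime s) :
    (loopErase l).length - 1 =
      ((loopErase (l.take (s + 1))).length - 1) + ((loopErase (l.drop s)).length - 1) := by
  have hsplit : loopErase l = loopErase (l.take (s + 1)) ++ loopErase (l.drop (s + 1)) := by
    rw [← loopErase_append h, take_append_drop]
  have hpivot : loopErase (l.drop s) = l[s] :: loopErase (l.drop (s + 1)) :=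
    drop_eq_getElem_cons hs ▸ loopErase_cons_of_notMem
      (h (mem_take_iff_getElem.mpr ⟨s, by omega, rfl⟩))
  have hhead : 0 < (loopErase (l.take (s + 1))).length :=
    length_pos_iff.mpr (loopErase_ne_nil (ne_nil_of_length_pos (by simp; omega)))
  rw [hsplit, hpivot, length_append, length_cons]
  omega

theorem length_loopErase_sub_one_eq_sum_subpath : ∀ (n : ℕ) (l : List α)
    (t : Fin (n + 1) → ℕ), StrictMono t → t 0 = 0 → t (Fin.last n) = l.length - 1 →
    (∀ i : Fin (n + 1), (i : ℕ) < n → l.IsCutTime (t i)) →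
    (loopErase l).length - 1 =
      ∑ i : Fin n, ((loopErase (l.subpath (t i.castSucc) (t i.succ))).length - 1)
  | 0, l, t, _, h0, hlast, _ => by
    have hlen : l.length - 1 = 0 := hlast.symm.trans h0
    rw [loopErase_of_length_le_one (by omega), Finset.univ_eq_empty, Finset.sum_empty]
    exact hlen
  | n + 1, l, t, hmono, h0, hlast, hcut => by
    set s := t (Fin.last n).castSucc
    have hs : s < l.length - 1 := hlast ▸ hmono (Fin.castSucc_lt_last (Fin.last n))
    have hpieces := length_loopErase_sub_one_eq_sum_subpath n (l.take (s + 1))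
      (t ∘ Fin.castSucc) (hmono.comp Fin.strictMono_castSucc) h0
      (by simp only [Function.comp_apply, length_take]; omega)
      (fun i hi => (hcut i.castSucc (by simp; omega)).take _)
    rw [Fin.sum_univ_castSucc, Fin.succ_last, hlast, subpath_length_sub_one,
      length_loopErase_sub_one_of_isCutTime (by omega) (hcut (Fin.last n).castSucc (by simp)),
      hpieces]
    congr 1
    refine Finset.sum_congr rfl fun i _ => ?_
    rw [Fin.succ_castSucc, Function.comp_apply, Function.comp_apply, subpath_take
      (hmono.monotone (Fin.castSucc_le_castSucc_iff.mpr (Fin.castSucc_lt_succ (i := i)).le))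
      (hmono.monotone (Fin.castSucc_le_castSucc_iff.mpr (Fin.le_last _)))]

end LoopErase

theorem loopErase_sum_pieces_general {d : ℕ} (lam : List (Fin d → ℤ))
    (n : ℕ) (t : Fin (n + 1) → ℕ) (hmono : StrictMono t)
    (h0 : t 0 = 0) (hlast : t (Fin.last n) = lam.length - 1)
    (hcut : ∀ i : Fin (n + 1), (i : ℕ) < n →
      ∀ x ∈ lam.take (t i + 1), x ∉ lam.drop (t i + 1)) :
    (loopErase lam).length - 1 =
      ∑ i : Fin n,
        ((loopErase ((lam.drop (t i.castSucc)).take (t i.succ - t i.castSucc + 1))).length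
          - 1) :=
  length_loopErase_sub_one_eq_sum_subpath n lam t hmono h0 hlast
    fun i hi _ hx hx' => hcut i hi _ hx hx'

/-- If `0 = t₀ < t₁ < ⋯ < t_n = m` are cut times of a nearest-neighbor
path `λ` of length `m` (each `tᵢ`, `i < n`, satisfying that the vertex sets
`{λ(0),…,λ(tᵢ)}` and `{λ(tᵢ+1),…,λ(m)}` are disjoint), then the number of steps of
`LE(λ)` is the sum over `i` of the numbers of steps of `LE(λ[t_{i-1}, t_i])`.
Here `λ[a,b]` is `(lam.drop a).take (b - a + 1)` and the number of steps of a path is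
its number of vertices minus one. -/
theorem loopErase_sum_pieces {d : ℕ} (lam : List (Fin d → ℤ)) (hpath : IsNNPath lam)
    (hne : lam ≠ []) (n : ℕ) (t : Fin (n + 1) → ℕ) (hmono : StrictMono t)
    (h0 : t 0 = 0) (hlast : t (Fin.last n) = lam.length - 1)
    (hcut : ∀ i : Fin (n + 1), (i : ℕ) < n →
      ∀ x ∈ lam.take (t i + 1), x ∉ lam.drop (t i + 1)) :
    (loopErase lam).length - 1 =
      ∑ i : Fin n,
        ((loopErase ((lam.drop (t i.castSucc)).take (t i.succ - t i.castSucc + 1))).length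
          - 1) :=
  loopErase_sum_pieces_general lam n t hmono h0 hlast hcut
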